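/- First integral of the Davis-Skodje flow: for every ε > 0, the function I(z₁, z₂) = (z₂ - z₁/(1+z₁)) · z₁^{-1/ε} on the half-plane {z₁ > 0} is constant along every solution of the Davis-Skodje system whose first component remains positive; i.e., if z is a solution on an interval J with z₁(t) > 0 for all t ∈ J, then t ↦ I(z₁(t), z₂(t)) is constant on J. -/

import Mathlib

open Real

/-!
Along a solution, the deviation `g = z₂ - z₁/(1+z₁)` from the slow manifold satisfies the linear
equation `g' = -g/ε` (the `-z₁/(1+z₁)²` term of the vector field is exactly the derivative of
`z₁/(1+z₁)` along `z₁' = -z₁`), while `z₁^(-1/ε)` satisfies `p' = p/ε`. Hence `(g p)' = 0`, and a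
function with vanishing derivative on an interval is constant there.
-/

theorem Set.OrdConnected.eq_of_hasDerivAt_eq_zero {E : Type*} [NormedAddCommGroup E]
    [NormedSpace ℝ E] {f : ℝ → E} {s : Set ℝ} (hs : s.OrdConnected)
    (hf : ∀ t ∈ s, HasDerivAt f 0 t) {x y : ℝ} (hx : x ∈ s) (hy : y ∈ s) : f x = f y := by
  have h := hs.convex.norm_image_sub_le_of_norm_hasDerivWithin_le
    (fun t ht => (hf t ht).hasDerivWithinAt) (fun _ _ => norm_zero.le) hy hx
  rw [zero_mul, norm_le_zero_iff, sub_eq_zero] at h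
  exact h

theorem HasDerivAt.rpow_const_of_deriv_neg_self {x : ℝ → ℝ} {t : ℝ} (hx : HasDerivAt x (-x t) t)
    (hxt : x t ≠ 0) (r : ℝ) : HasDerivAt (fun u => x u ^ r) (-r * x t ^ r) t := by
  convert hx.rpow_const (p := r) (Or.inl hxt) using 1
  rw [rpow_sub_one hxt]
  field_simp

theorem HasDerivAt.div_one_add {x : ℝ → ℝ} {x' t : ℝ} (hx : HasDerivAt x x' t)
    (hxt : 1 + x t ≠ 0) : HasDerivAt (fun u => x u / (1 + x u)) (x' / (1 + x t) ^ 2) t := by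
  refine (hx.div ((hasDerivAt_const t 1).add hx) hxt).congr_deriv ?_
  simp only [Pi.add_apply, zero_add]
  ring

theorem hasDerivAt_sub_slowManifold {z₁ z₂ : ℝ → ℝ} {c t : ℝ} (hz₁ : HasDerivAt z₁ (-(z₁ t)) t)
    (hz₂ : HasDerivAt z₂ (c * (-(z₂ t) + z₁ t / (1 + z₁ t)) - z₁ t / (1 + z₁ t) ^ 2) t)
    (hz₁t : 1 + z₁ t ≠ 0) :
    HasDerivAt (fun u => z₂ u - z₁ u / (1 + z₁ u)) (-c * (z₂ t - z₁ t / (1 + z₁ t))) t := by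
  refine (hz₂.sub (hz₁.div_one_add hz₁t)).congr_deriv ?_
  ring

theorem davisSkodje_first_integral_general (ε : ℝ)
    (J : Set ℝ) (hJ : J.OrdConnected) (z₁ z₂ : ℝ → ℝ)
    (hz₁ : ∀ t ∈ J, HasDerivAt z₁ (-(z₁ t)) t)
    (hz₂ : ∀ t ∈ J, HasDerivAt z₂
      ((1 / ε) * (-(z₂ t) + z₁ t / (1 + z₁ t)) - z₁ t / (1 + z₁ t) ^ 2) t)
    (hpos : ∀ t ∈ J, 0 < z₁ t) :
    ∀ s ∈ J, ∀ t ∈ J,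
      (z₂ s - z₁ s / (1 + z₁ s)) * z₁ s ^ (-1 / ε) =
        (z₂ t - z₁ t / (1 + z₁ t)) * z₁ t ^ (-1 / ε) := by
  have hderiv : ∀ u ∈ J,
      HasDerivAt (fun u => (z₂ u - z₁ u / (1 + z₁ u)) * z₁ u ^ (-1 / ε)) 0 u := by
    intro u hu
    have hdev := hasDerivAt_sub_slowManifold (hz₁ u hu) (hz₂ u hu) (by linarith [hpos u hu])
    have hpow := (hz₁ u hu).rpow_const_of_deriv_neg_self (hpos u hu).ne' (-1 / ε)
    refine (hdev.mul hpow).congr_deriv ?_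
    ring
  exact fun s hs t ht => hJ.eq_of_hasDerivAt_eq_zero hderiv hs ht

/-- First integral of the Davis-Skodje flow: the function
`I(z₁, z₂) = (z₂ - z₁/(1+z₁)) · z₁^(-1/ε)` is constant along every solution whose
first component remains positive. -/
theorem davisSkodje_first_integral (ε : ℝ) (hε : 0 < ε)
    (J : Set ℝ) (hJ : J.OrdConnected) (z₁ z₂ : ℝ → ℝ)
    (hz₁ : ∀ t ∈ J, HasDerivAt z₁ (-(z₁ t)) t)
    (hz₂ : ∀ t ∈ J, HasDerivAt z₂
      ((1 / ε) * (-(z₂ t) + z₁ t / (1 + z₁ t)) - z₁ t / (1 + z₁ t) ^ 2) t)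
    (hpos : ∀ t ∈ J, 0 < z₁ t) :
    ∀ s ∈ J, ∀ t ∈ J,
      (z₂ s - z₁ s / (1 + z₁ s)) * z₁ s ^ (-1 / ε) =
        (z₂ t - z₁ t / (1 + z₁ t)) * z₁ t ^ (-1 / ε) :=
  davisSkodje_first_integral_general ε J hJ z₁ z₂ hz₁ hz₂ hpos
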